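/- Let $H$ be a finite-dimensional Hopf algebra over a field $k$. Then $\nu_n(H^*) = \nu_n(H)$ for all $n \geq 1$, where $H^*$ is the dual Hopf algebra. -/
import Mathlib

open TensorProduct

variable {k V : Type*} [Field k] [AddCommGroup V] [Module k V]

/-- The `n`-th convolution power of the identity (Sweedler power map) of a (co)algebra with
the given multiplication, unit, comultiplication and counit. -/
noncomputable def convIdPow (mu : V ⊗[k] V →ₗ[k] V) (unit : k →ₗ[k] V)
    (del : V →ₗ[k] V ⊗[k] V) (eps : V →ₗ[k] k) : ℕ → (V →ₗ[k] V)
  | 0 => unit ∘ₗ eps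
  | n + 1 => mu ∘ₗ TensorProduct.map LinearMap.id (convIdPow mu unit del eps n) ∘ₗ del

lemma dualDistribEquiv_coe {k H : Type*} [Field k] [AddCommGroup H] [Module k H]
    [FiniteDimensional k H] :
    (TensorProduct.dualDistribEquiv k H H).toLinearMap = TensorProduct.dualDistrib k H H := by
  rfl

lemma dualDistrib_natural {k H : Type*} [Field k] [AddCommGroup H] [Module k H]
    (f : H →ₗ[k] H) :
    TensorProduct.dualDistrib k H H ∘ₗ
        TensorProduct.map LinearMap.id f.dualMap
      = (TensorProduct.map LinearMap.id f).dualMap ∘ₗ TensorProduct.dualDistrib k H H := by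
  apply TensorProduct.ext'
  intro g h
  apply LinearMap.ext
  intro x
  induction x using TensorProduct.induction_on with
  | zero => simp
  | tmul m n => simp [TensorProduct.dualDistrib_apply]
  | add a b ha hb => simp_all [map_add]

lemma convIdPow_dual {k H : Type*} [Field k] [Ring H] [HopfAlgebra k H]
    [FiniteDimensional k H] (m : ℕ) :
    convIdPow
        ((Coalgebra.comul (R := k) (A := H)).dualMap ∘ₗ
          (TensorProduct.dualDistribEquiv k H H).toLinearMap)
        (LinearMap.toSpanSingleton k (Module.Dual k H) (Coalgebra.counit (R := k)))
        ((TensorProduct.dualDistribEquiv k H H).symm.toLinearMap ∘ₗ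
          (LinearMap.mul' k H).dualMap)
        (LinearMap.applyₗ (1 : H)) m
      = (convIdPow (LinearMap.mul' k H) (Algebra.linearMap k H)
          (Coalgebra.comul (R := k)) (Coalgebra.counit (R := k)) m).dualMap := by
  induction m with
  | zero =>
    apply LinearMap.ext; intro f
    apply LinearMap.ext; intro x
    simp [convIdPow, LinearMap.dualMap_apply, Algebra.linearMap_apply, Algebra.algebraMap_eq_smul_one,
      map_smul, mul_comm]
  | succ n ih =>
    have hD : (TensorProduct.dualDistribEquiv k H H).toLinearMap ∘ₗ
        TensorProduct.map LinearMap.id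
          (convIdPow (LinearMap.mul' k H) (Algebra.linearMap k H)
            (Coalgebra.comul (R := k)) (Coalgebra.counit (R := k)) n).dualMap
      = (TensorProduct.map LinearMap.id
          (convIdPow (LinearMap.mul' k H) (Algebra.linearMap k H)
            (Coalgebra.comul (R := k)) (Coalgebra.counit (R := k)) n)).dualMap ∘ₗ
        (TensorProduct.dualDistribEquiv k H H).toLinearMap := by
      rw [dualDistribEquiv_coe]; exact dualDistrib_natural _
    show _ ∘ₗ _ ∘ₗ _ = _
    rw [ih]
    rw [show (convIdPow (LinearMap.mul' k H) (Algebra.linearMap k H)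
          (Coalgebra.comul (R := k)) (Coalgebra.counit (R := k)) (n+1))
        = LinearMap.mul' k H ∘ₗ TensorProduct.map LinearMap.id
            (convIdPow (LinearMap.mul' k H) (Algebra.linearMap k H)
              (Coalgebra.comul (R := k)) (Coalgebra.counit (R := k)) n) ∘ₗ
          Coalgebra.comul from rfl]
    rw [← LinearMap.dualMap_comp_dualMap, ← LinearMap.dualMap_comp_dualMap]
    apply LinearMap.ext; intro f
    simp only [LinearMap.comp_apply, LinearEquiv.coe_coe]
    rw [← LinearEquiv.coe_coe, ← LinearMap.comp_apply
      ((TensorProduct.dualDistribEquiv k H H).toLinearMap), hD, LinearMap.comp_apply,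
      LinearEquiv.coe_coe, LinearEquiv.apply_symm_apply]

/-- For a finite-dimensional Hopf algebra `H` over a field `k`, `ν_n(H^*) = ν_n(H)` for all
`n ≥ 1`.  The dual Hopf algebra `H^*` has multiplication dual to `Δ_H`, unit `ε_H`,
comultiplication dual to the multiplication of `H`, counit the evaluation at `1`, and
antipode `S_H^*`. -/
theorem indicator_dual {k H : Type*} [Field k] [Ring H] [HopfAlgebra k H]
    [FiniteDimensional k H] :
    ∀ n : ℕ, 1 ≤ n →
      LinearMap.trace k (Module.Dual k H)
          ((HopfAlgebra.antipode (R := k) (A := H)).dualMap ∘ₗ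
            convIdPow
              ((Coalgebra.comul (R := k) (A := H)).dualMap ∘ₗ
                (TensorProduct.dualDistribEquiv k H H).toLinearMap)
              (LinearMap.toSpanSingleton k (Module.Dual k H) (Coalgebra.counit (R := k)))
              ((TensorProduct.dualDistribEquiv k H H).symm.toLinearMap ∘ₗ
                (LinearMap.mul' k H).dualMap)
              (LinearMap.applyₗ (1 : H))
              (n - 1))
        = LinearMap.trace k H
            (HopfAlgebra.antipode (R := k) ∘ₗ
              convIdPow (LinearMap.mul' k H) (Algebra.linearMap k H)
                (Coalgebra.comul (R := k)) (Coalgebra.counit (R := k)) (n - 1)) := by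
  intro n _
  rw [convIdPow_dual, LinearMap.dualMap_comp_dualMap, LinearMap.dualMap_def,
    LinearMap.trace_transpose', LinearMap.trace_comp_comm']
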